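/- arXiv:1403.0609 — 2 statements merged into one kernel-verified Lean document; each statement's English description precedes it below -/
import Mathlib

section
/- Let U ⊆ ℝ^p be open and convex, let w : [0,1] → [0,∞) be continuous, let f, f₀ : [0,1] → ℝ be continuously differentiable, let θ, θ₀ ∈ U, and let F : [0,1] × ℝ × U → ℝ be twice continuously differentiable in all arguments. Define S(t, y, η) = ∇_θF(t, y, η) · (f₀′(t) − F(t, f₀(t), θ₀)) ∈ ℝ^p, let D_θS denote its p×p Jacobian in η, and set M(f, θ) = ∫₀¹ ∇_θF(t, f(t), θ) (∫₀¹ ∇_θF(t, f(t), θ + λ(θ₀ − θ)) dλ)ᵀ w(t) dt − ∫₀¹ (∫₀¹ D_θS(t, f(t), θ₀ + λ(θ − θ₀)) dλ) w(t) dt. Suppose the two first-order conditions hold: ∫₀¹ ∇_θF(t, f(t), θ)(f′(t) − F(t, f(t), θ)) w(t) dt = 0 and ∫₀¹ ∇_θF(t, f₀(t), θ₀)(f₀′(t) − F(t, f₀(t), θ₀)) w(t) dt = 0. Then M(f, θ)(θ − θ₀) = T₁ + T₂ + T₃, where T₁ = ∫₀¹ (∇_θF(t, f(t), θ₀) − ∇_θF(t,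 f₀(t), θ₀)) (f₀′(t) − F(t, f₀(t), θ₀)) w(t) dt, T₂ = ∫₀¹ ∇_θF(t, f(t), θ) (f′(t) − f₀′(t)) w(t) dt, and T₃ = ∫₀¹ ∇_θF(t, f(t), θ) (F(t, f₀(t), θ₀) − F(t, f(t), θ₀)) w(t) dt. -/
/-!
Along the segment between `θ` and `θ₀` the fundamental theorem of calculus evaluates the two
`λ`-integrals in `M(f, θ)(θ - θ₀)`: the first becomes `F(t, f, θ) - F(t, f, θ₀)`, the second
`(f₀' - F(t, f₀, θ₀)) (∇_θF(t, f, θ) - ∇_θF(t, f, θ₀))`. After that the identity is linear: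
pointwise, the difference of its two sides is the difference of the integrands of the two
first-order conditions. Since `F` is `C²`, `∇_θF` is `C¹`, which makes all integrands continuous.
-/

open MeasureTheory Set
open scoped RealInnerProductSpace

section Segment

variable {E V : Type*} [NormedAddCommGroup E] [NormedSpace ℝ E]
  [NormedAddCommGroup V] [NormedSpace ℝ V] [CompleteSpace V] {U : Set E} {a b : E}

theorem Convex.integral_fderiv_segment_apply_eq_sub (hU : Convex ℝ U) (ha : a ∈ U) (hb : b ∈ U)
    {h : E → V} {h' : E → E →L[ℝ] V} (hh : ∀ x ∈ U, HasFDerivAt h (h' x) x)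
    (hh' : ContinuousOn h' U) :
    ∫ l in Icc (0:ℝ) 1, h' (a + l • (b - a)) (b - a) = h b - h a := by
  have hseg : MapsTo (fun l : ℝ => a + l • (b - a)) (Icc 0 1) U :=
    fun l hl => hU.add_smul_sub_mem ha hb hl
  have hderiv : ∀ l ∈ uIcc (0:ℝ) 1,
      HasDerivAt (fun l : ℝ => h (a + l • (b - a))) (h' (a + l • (b - a)) (b - a)) l := by
    intro l hl
    rw [uIcc_of_le zero_le_one] at hl
    exact (hh _ (hseg hl)).comp_hasDerivAt l (((hasDerivAt_id l).smul_const (b - a)).const_add a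
      |>.congr_deriv (one_smul ℝ _))
  have hcont : ContinuousOn (fun l : ℝ => h' (a + l • (b - a)) (b - a)) (uIcc 0 1) := by
    rw [uIcc_of_le zero_le_one]
    exact (hh'.comp (by fun_prop) hseg).clm_apply continuousOn_const
  rw [integral_Icc_eq_integral_Ioc, ← intervalIntegral.integral_of_le zero_le_one,
    intervalIntegral.integral_eq_sub_of_hasDerivAt hderiv hcont.intervalIntegrable]
  simp

theorem Convex.apply_integral_fderiv_segment_eq_sub (hU : Convex ℝ U) (ha : a ∈ U) (hb : b ∈ U)
    {h : E → V} {h' : E → E →L[ℝ] V} (hh : ∀ x ∈ U, HasFDerivAt h (h' x) x)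
    (hh' : ContinuousOn h' U) :
    (∫ l in Icc (0:ℝ) 1, h' (a + l • (b - a))) (b - a) = h b - h a := by
  have hint : IntegrableOn (fun l : ℝ => h' (a + l • (b - a))) (Icc 0 1) :=
    (hh'.comp (by fun_prop) fun l hl => hU.add_smul_sub_mem ha hb hl).integrableOn_Icc
  rw [ContinuousLinearMap.integral_apply hint, hU.integral_fderiv_segment_apply_eq_sub ha hb hh hh']

end Segment

theorem Convex.inner_integral_gradient_segment_eq_sub {E : Type*} [NormedAddCommGroup E]
    [InnerProductSpace ℝ E] [CompleteSpace E] {U : Set E} {a b : E}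
    (hU : Convex ℝ U) (ha : a ∈ U) (hb : b ∈ U)
    {g : E → ℝ} {g' : E → E} (hg : ∀ x ∈ U, HasGradientAt g (g' x) x)
    (hg' : ContinuousOn g' U) :
    ⟪∫ l in Icc (0:ℝ) 1, g' (a + l • (b - a)), b - a⟫ = g b - g a := by
  have hint : IntegrableOn (fun l : ℝ => g' (a + l • (b - a))) (Icc 0 1) :=
    (hg'.comp (by fun_prop) fun l hl => hU.add_smul_sub_mem ha hb hl).integrableOn_Icc
  rw [real_inner_comm, ← integral_inner hint,
    ← hU.integral_fderiv_segment_apply_eq_sub ha hb (fun x hx => (hg x hx).hasFDerivAt)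
      ((InnerProductSpace.toDual ℝ E).continuous.comp_continuousOn hg')]
  simp [real_inner_comm]

theorem contDiffOn_partialGradient {X Y E : Type*} [NormedAddCommGroup X] [NormedSpace ℝ X]
    [NormedAddCommGroup Y] [NormedSpace ℝ Y] [NormedAddCommGroup E] [InnerProductSpace ℝ E]
    [CompleteSpace E] {A : Set X} {B : Set Y} {U : Set E}
    (hA : UniqueDiffOn ℝ A) (hB : UniqueDiffOn ℝ B) (hU : IsOpen U)
    {G : X → Y → E → ℝ} {G' : X → Y → E → E} {m n : WithTop ℕ∞} (hmn : n + 1 ≤ m)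
    (hG : ContDiffOn ℝ m (fun q : X × Y × E => G q.1 q.2.1 q.2.2) (A ×ˢ B ×ˢ U))
    (hG' : ∀ x ∈ A, ∀ y ∈ B, ∀ z ∈ U, HasGradientAt (G x y) (G' x y z) z) :
    ContDiffOn ℝ n (fun q : X × Y × E => G' q.1 q.2.1 q.2.2) (A ×ˢ B ×ˢ U) := by
  set S := A ×ˢ B ×ˢ U
  let ι : E →L[ℝ] X × Y × E := .inr ℝ X (Y × E) ∘L .inr ℝ Y E
  -- the partial gradient is the Riesz representative of the full derivative restricted to `E`
  let R : (X × Y × E →L[ℝ] ℝ) →L[ℝ] E :=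
    (InnerProductSpace.toDual ℝ E).symm.toContinuousLinearEquiv.toContinuousLinearMap ∘L
      (ContinuousLinearMap.compL ℝ E (X × Y × E) ℝ).flip ι
  refine (R.contDiff.comp_contDiffOn
    (hG.fderivWithin (hA.prod (hB.prod hU.uniqueDiffOn)) hmn)).congr ?_
  rintro ⟨x, y, z⟩ ⟨hx, hy, hz⟩
  have hm : m ≠ 0 := (zero_lt_one.trans_le (le_add_self.trans hmn)).ne'
  have hι : HasFDerivAt (fun z' : E => (x, y, z')) ι z :=
    (hasFDerivAt_prodMk_right x _).comp z (hasFDerivAt_prodMk_right y z)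
  have hpartial : HasFDerivWithinAt (G x y) ((fderivWithin ℝ _ S (x, y, z)).comp ι) U z :=
    HasFDerivWithinAt.comp (g := fun q : X × Y × E => G q.1 q.2.1 q.2.2) z
      (hG.differentiableOn hm _ ⟨hx, hy, hz⟩).hasFDerivWithinAt hι.hasFDerivWithinAt
      (show MapsTo (fun z' => (x, y, z')) U S from fun z' hz' => ⟨hx, hy, hz'⟩)
  have hunique := (hU.uniqueDiffOn z hz).eq (hG' x hx y hy z hz).hasFDerivAt.hasFDerivWithinAt
    hpartial
  simp [R, ← hunique]

theorem ContDiffOn.continuousOn_of_hasFDerivAt {E V : Type*} [NormedAddCommGroup E]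
    [NormedSpace ℝ E] [NormedAddCommGroup V] [NormedSpace ℝ V] {U : Set E} {g : E → V}
    {g' : E → E →L[ℝ] V} (hg : ContDiffOn ℝ 1 g U) (hU : IsOpen U)
    (hg' : ∀ x ∈ U, HasFDerivAt g (g' x) x) : ContinuousOn g' U :=
  (hg.continuousOn_fderiv_of_isOpen hU le_rfl).congr fun x hx => (hg' x hx).fderiv.symm

theorem ContinuousOn.comp_graph_const {X Y Z V : Type*} [TopologicalSpace X] [TopologicalSpace Y]
    [TopologicalSpace Z] [TopologicalSpace V] {A : Set X} {U : Set Z} {H : X → Y → Z → V}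
    (hH : ContinuousOn (fun q : X × Y × Z => H q.1 q.2.1 q.2.2) (A ×ˢ univ ×ˢ U))
    {y : X → Y} (hy : ContinuousOn y A) {z : Z} (hz : z ∈ U) :
    ContinuousOn (fun x => H x (y x) z) A :=
  hH.comp (continuousOn_id.prodMk (hy.prodMk continuousOn_const)) fun _ hx => ⟨hx, mem_univ _, hz⟩

theorem setIntegral_sub_eq_of_first_order_conditions {X E V : Type*} [TopologicalSpace X]
    [T2Space X] [MeasurableSpace X] [OpensMeasurableSpace X] {μ : Measure X}
    [IsFiniteMeasureOnCompacts μ] [TopologicalSpace E] [NormedAddCommGroup V]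
    [NormedSpace ℝ V] {K : Set X} (hK : IsCompact K) {U : Set E} {θ θ₀ : E} (hθ : θ ∈ U)
    (hθ₀ : θ₀ ∈ U) {w f f' f₀ f₀' : X → ℝ} (hw : ContinuousOn w K) (hf : ContinuousOn f K)
    (hf' : ContinuousOn f' K) (hf₀ : ContinuousOn f₀ K) (hf₀' : ContinuousOn f₀' K)
    {F : X → ℝ → E → ℝ} {Fθ : X → ℝ → E → V}
    (hF : ContinuousOn (fun q : X × ℝ × E => F q.1 q.2.1 q.2.2) (K ×ˢ univ ×ˢ U))
    (hFθ : ContinuousOn (fun q : X × ℝ × E => Fθ q.1 q.2.1 q.2.2) (K ×ˢ univ ×ˢ U))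
    (hfo : ∫ t in K, ((f' t - F t (f t) θ) * w t) • Fθ t (f t) θ ∂μ = 0)
    (hfo₀ : ∫ t in K, ((f₀' t - F t (f₀ t) θ₀) * w t) • Fθ t (f₀ t) θ₀ ∂μ = 0) :
    (∫ t in K, ((F t (f t) θ - F t (f t) θ₀) * w t) • Fθ t (f t) θ ∂μ)
      - ∫ t in K, ((f₀' t - F t (f₀ t) θ₀) * w t) • (Fθ t (f t) θ - Fθ t (f t) θ₀) ∂μ
    = (∫ t in K, ((f₀' t - F t (f₀ t) θ₀) * w t) • (Fθ t (f t) θ₀ - Fθ t (f₀ t) θ₀) ∂μ)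
      + (∫ t in K, ((f' t - f₀' t) * w t) • Fθ t (f t) θ ∂μ)
      + ∫ t in K, ((F t (f₀ t) θ₀ - F t (f t) θ₀) * w t) • Fθ t (f t) θ ∂μ := by
  have hint : ∀ {a : X → ℝ} {v : X → V}, ContinuousOn a K → ContinuousOn v K →
      IntegrableOn (fun t => (a t * w t) • v t) K μ :=
    fun ha hv => ((ha.fun_mul hw).fun_smul hv).integrableOn_compact hK
  have hF_θ := hF.comp_graph_const hf hθ
  have hF_θ₀ := hF.comp_graph_const hf hθ₀
  have hF₀_θ₀ := hF.comp_graph_const hf₀ hθ₀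
  have hFθ_θ := hFθ.comp_graph_const hf hθ
  have hFθ_θ₀ := hFθ.comp_graph_const hf hθ₀
  have hFθ₀_θ₀ := hFθ.comp_graph_const hf₀ hθ₀
  have hT₁ := hint (hf₀'.fun_sub hF₀_θ₀) (hFθ_θ₀.fun_sub hFθ₀_θ₀)
  have hT₂ := hint (hf'.fun_sub hf₀') hFθ_θ
  have hT₃ := hint (hF₀_θ₀.fun_sub hF_θ₀) hFθ_θ
  have hJ := hint (hf'.fun_sub hF_θ) hFθ_θ
  have hJ₀ := hint (hf₀'.fun_sub hF₀_θ₀) hFθ₀_θ₀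
  calc _ = ∫ t in K, ((f₀' t - F t (f₀ t) θ₀) * w t) • (Fθ t (f t) θ₀ - Fθ t (f₀ t) θ₀)
          + ((f' t - f₀' t) * w t) • Fθ t (f t) θ
          + ((F t (f₀ t) θ₀ - F t (f t) θ₀) * w t) • Fθ t (f t) θ
          + (((f₀' t - F t (f₀ t) θ₀) * w t) • Fθ t (f₀ t) θ₀
            - ((f' t - F t (f t) θ) * w t) • Fθ t (f t) θ) ∂μ := by
        rw [← integral_sub (hint (hF_θ.fun_sub hF_θ₀) hFθ_θ)
          (hint (hf₀'.fun_sub hF₀_θ₀) (hFθ_θ.fun_sub hFθ_θ₀))]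
        congr 1
        funext t
        module
    _ = _ := by
        rw [integral_add ((hT₁.fun_add hT₂).fun_add hT₃) (hJ₀.fun_sub hJ),
          integral_add (hT₁.fun_add hT₂) hT₃, integral_add hT₁ hT₂, integral_sub hJ₀ hJ,
          hfo, hfo₀, sub_self, add_zero]

theorem first_order_condition_difference_identity_general
    (p : ℕ) (U : Set (EuclideanSpace ℝ (Fin p)))
    (hUopen : IsOpen U) (hUconv : Convex ℝ U)
    (w : ℝ → ℝ) (hw_cont : ContinuousOn w (Icc (0:ℝ) 1))
    (f f' f₀ f₀' : ℝ → ℝ)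
    (hf : ∀ t ∈ Icc (0:ℝ) 1, HasDerivAt f (f' t) t)
    (hf'c : ContinuousOn f' (Icc (0:ℝ) 1))
    (hf₀ : ∀ t ∈ Icc (0:ℝ) 1, HasDerivAt f₀ (f₀' t) t)
    (hf₀'c : ContinuousOn f₀' (Icc (0:ℝ) 1))
    (θ θ₀ : EuclideanSpace ℝ (Fin p)) (hθ : θ ∈ U) (hθ₀ : θ₀ ∈ U)
    (F : ℝ → ℝ → EuclideanSpace ℝ (Fin p) → ℝ)
    (hF : ContDiffOn ℝ 2 (fun q : ℝ × ℝ × EuclideanSpace ℝ (Fin p) => F q.1 q.2.1 q.2.2)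
      (Icc (0:ℝ) 1 ×ˢ (univ : Set ℝ) ×ˢ U))
    -- `Fθ t y η` is the gradient of `F` in its third argument
    (Fθ : ℝ → ℝ → EuclideanSpace ℝ (Fin p) → EuclideanSpace ℝ (Fin p))
    (hFθ : ∀ t ∈ Icc (0:ℝ) 1, ∀ y : ℝ, ∀ η ∈ U,
      HasGradientAt (fun η' => F t y η') (Fθ t y η) η)
    -- `DS t y η` is the Jacobian in `η` of `S (t, y, η) = ∇_θF (t, y, η) (f₀' t − F (t, f₀ t, θ₀))`
    (DS : ℝ → ℝ → EuclideanSpace ℝ (Fin p) →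
      EuclideanSpace ℝ (Fin p) →L[ℝ] EuclideanSpace ℝ (Fin p))
    (hDS : ∀ t ∈ Icc (0:ℝ) 1, ∀ y : ℝ, ∀ η ∈ U,
      HasFDerivAt (fun η' => ((f₀' t - F t (f₀ t) θ₀) • Fθ t y η' : EuclideanSpace ℝ (Fin p)))
        (DS t y η) η)
    -- the two first-order conditions
    (hfo : (∫ t in Icc (0:ℝ) 1, ((f' t - F t (f t) θ) * w t) • Fθ t (f t) θ)
      = (0 : EuclideanSpace ℝ (Fin p)))
    (hfo₀ : (∫ t in Icc (0:ℝ) 1, ((f₀' t - F t (f₀ t) θ₀) * w t) • Fθ t (f₀ t) θ₀)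
      = (0 : EuclideanSpace ℝ (Fin p))) :
    (∫ t in Icc (0:ℝ) 1,
        (⟪(∫ l in Icc (0:ℝ) 1, Fθ t (f t) (θ + l • (θ₀ - θ))), θ - θ₀⟫ * w t) • Fθ t (f t) θ)
      - (∫ t in Icc (0:ℝ) 1,
          w t • ((∫ l in Icc (0:ℝ) 1, DS t (f t) (θ₀ + l • (θ - θ₀))) (θ - θ₀)))
    = (∫ t in Icc (0:ℝ) 1,
        ((f₀' t - F t (f₀ t) θ₀) * w t) • (Fθ t (f t) θ₀ - Fθ t (f₀ t) θ₀))
      + (∫ t in Icc (0:ℝ) 1, ((f' t - f₀' t) * w t) • Fθ t (f t) θ)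
      + (∫ t in Icc (0:ℝ) 1,
          ((F t (f₀ t) θ₀ - F t (f t) θ₀) * w t) • Fθ t (f t) θ) := by
  have hFθC1 := contDiffOn_partialGradient (n := 1) (uniqueDiffOn_Icc zero_lt_one)
    uniqueDiffOn_univ hUopen (by norm_num) hF fun t ht y _ η hη => hFθ t ht y η hη
  have hFθ_slice : ∀ t ∈ Icc (0:ℝ) 1, ∀ y, ContDiffOn ℝ 1 (Fθ t y) U := fun t ht y =>
    hFθC1.comp (f := fun η => (t, y, η)) (by fun_prop) fun η hη => ⟨ht, mem_univ y, hη⟩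
  have hA : ∀ t ∈ Icc (0:ℝ) 1,
      (⟪∫ l in Icc (0:ℝ) 1, Fθ t (f t) (θ + l • (θ₀ - θ)), θ - θ₀⟫ * w t) • Fθ t (f t) θ
        = ((F t (f t) θ - F t (f t) θ₀) * w t) • Fθ t (f t) θ := fun t ht => by
    rw [← neg_sub θ₀, inner_neg_right, hUconv.inner_integral_gradient_segment_eq_sub hθ hθ₀
      (hFθ t ht (f t)) (hFθ_slice t ht (f t)).continuousOn, neg_sub]
  have hB : ∀ t ∈ Icc (0:ℝ) 1,
      w t • (∫ l in Icc (0:ℝ) 1, DS t (f t) (θ₀ + l • (θ - θ₀))) (θ - θ₀)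
        = ((f₀' t - F t (f₀ t) θ₀) * w t) • (Fθ t (f t) θ - Fθ t (f t) θ₀) := fun t ht => by
    rw [hUconv.apply_integral_fderiv_segment_eq_sub hθ₀ hθ (hDS t ht (f t))
      (((hFθ_slice t ht (f t)).const_smul _).continuousOn_of_hasFDerivAt hUopen (hDS t ht (f t))),
      ← smul_sub, smul_smul, mul_comm]
  rw [setIntegral_congr_fun measurableSet_Icc hA, setIntegral_congr_fun measurableSet_Icc hB]
  exact setIntegral_sub_eq_of_first_order_conditions isCompact_Icc hθ hθ₀ hw_cont
    (HasDerivAt.continuousOn hf) hf'c (HasDerivAt.continuousOn hf₀) hf₀'c hF.continuousOn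
    hFθC1.continuousOn hfo hfo₀

/-- the exact algebraic identity `M(f,θ)(θ − θ₀) = T₁ + T₂ + T₃` obtained by
subtracting the first-order conditions satisfied by `(f, θ)` and `(f₀, θ₀)`. -/
theorem first_order_condition_difference_identity
    (p : ℕ) (U : Set (EuclideanSpace ℝ (Fin p)))
    (hUopen : IsOpen U) (hUconv : Convex ℝ U)
    (w : ℝ → ℝ) (hw_cont : ContinuousOn w (Icc (0:ℝ) 1))
    (hw_nonneg : ∀ t ∈ Icc (0:ℝ) 1, 0 ≤ w t)
    (f f' f₀ f₀' : ℝ → ℝ)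
    (hf : ∀ t ∈ Icc (0:ℝ) 1, HasDerivAt f (f' t) t)
    (hf'c : ContinuousOn f' (Icc (0:ℝ) 1))
    (hf₀ : ∀ t ∈ Icc (0:ℝ) 1, HasDerivAt f₀ (f₀' t) t)
    (hf₀'c : ContinuousOn f₀' (Icc (0:ℝ) 1))
    (θ θ₀ : EuclideanSpace ℝ (Fin p)) (hθ : θ ∈ U) (hθ₀ : θ₀ ∈ U)
    (F : ℝ → ℝ → EuclideanSpace ℝ (Fin p) → ℝ)
    (hF : ContDiffOn ℝ 2 (fun q : ℝ × ℝ × EuclideanSpace ℝ (Fin p) => F q.1 q.2.1 q.2.2)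
      (Icc (0:ℝ) 1 ×ˢ (univ : Set ℝ) ×ˢ U))
    -- `Fθ t y η` is the gradient of `F` in its third argument
    (Fθ : ℝ → ℝ → EuclideanSpace ℝ (Fin p) → EuclideanSpace ℝ (Fin p))
    (hFθ : ∀ t ∈ Icc (0:ℝ) 1, ∀ y : ℝ, ∀ η ∈ U,
      HasGradientAt (fun η' => F t y η') (Fθ t y η) η)
    -- `DS t y η` is the Jacobian in `η` of `S (t, y, η) = ∇_θF (t, y, η) (f₀' t − F (t, f₀ t, θ₀))`
    (DS : ℝ → ℝ → EuclideanSpace ℝ (Fin p) →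
      EuclideanSpace ℝ (Fin p) →L[ℝ] EuclideanSpace ℝ (Fin p))
    (hDS : ∀ t ∈ Icc (0:ℝ) 1, ∀ y : ℝ, ∀ η ∈ U,
      HasFDerivAt (fun η' => ((f₀' t - F t (f₀ t) θ₀) • Fθ t y η' : EuclideanSpace ℝ (Fin p)))
        (DS t y η) η)
    -- the two first-order conditions
    (hfo : (∫ t in Icc (0:ℝ) 1, ((f' t - F t (f t) θ) * w t) • Fθ t (f t) θ)
      = (0 : EuclideanSpace ℝ (Fin p)))
    (hfo₀ : (∫ t in Icc (0:ℝ) 1, ((f₀' t - F t (f₀ t) θ₀) * w t) • Fθ t (f₀ t) θ₀)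
      = (0 : EuclideanSpace ℝ (Fin p))) :
    (∫ t in Icc (0:ℝ) 1,
        (⟪(∫ l in Icc (0:ℝ) 1, Fθ t (f t) (θ + l • (θ₀ - θ))), θ - θ₀⟫ * w t) • Fθ t (f t) θ)
      - (∫ t in Icc (0:ℝ) 1,
          w t • ((∫ l in Icc (0:ℝ) 1, DS t (f t) (θ₀ + l • (θ - θ₀))) (θ - θ₀)))
    = (∫ t in Icc (0:ℝ) 1,
        ((f₀' t - F t (f₀ t) θ₀) * w t) • (Fθ t (f t) θ₀ - Fθ t (f₀ t) θ₀))
      + (∫ t in Icc (0:ℝ) 1, ((f' t - f₀' t) * w t) • Fθ t (f t) θ)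
      + (∫ t in Icc (0:ℝ) 1,
          ((F t (f₀ t) θ₀ - F t (f t) θ₀) * w t) • Fθ t (f t) θ) :=
  first_order_condition_difference_identity_general p U hUopen hUconv w hw_cont f f' f₀ f₀' hf hf'c
    hf₀ hf₀'c θ θ₀ hθ hθ₀ F hF Fθ hFθ DS hDS hfo hfo₀
end

section
/- Let Σ be a real symmetric positive definite K×K matrix and let c ≥ 0. Let Σ^{-1/2} denote the inverse of the unique symmetric positive definite square root of Σ, and similarly (Σ + cΣ²)^{-1/2}. Then the matrix A = Σ^{-1/2} − (Σ + cΣ²)^{-1/2} is symmetric positive semidefinite, and every entry of A satisfies |A_{jk}| ≤ (c/2) · √(λ_max(Σ)), where λ_max(Σ) is the largest eigenvalue of Σ. -/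
/-!
By uniqueness of positive square roots, `R⁻¹` and `S⁻¹` are functions of `Sig` in the
continuous functional calculus, so `R⁻¹ - S⁻¹ = f(Sig)` with `f x = x^{-1/2} - (x + c x²)^{-1/2}`,
and `0 ≤ f x ≤ (c/2) √x` for `x > 0`. Nonnegativity of `f` on the spectrum makes `f(Sig)` positive semidefinite. Writing
`f(Sig) = U diag(f(λᵢ)) U*` with `U` unitary, each entry is a sum `∑ᵢ U_ji f(λᵢ) conj(U_ki)`,
bounded by `maxᵢ |f(λᵢ)|` because the rows of `U` are unit vectors.
-/

open Finset
open scoped MatrixOrder ComplexOrder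

lemma inv_sqrt_sub_inv_sqrt_add_mul_sq_nonneg {x c : ℝ} (hx : 0 < x) (hc : 0 ≤ c) :
    0 ≤ (√x)⁻¹ - (√(x + c * x ^ 2))⁻¹ :=
  sub_nonneg.2 <| inv_anti₀ (Real.sqrt_pos.2 hx) <| Real.sqrt_le_sqrt <|
    le_add_of_nonneg_right (by positivity)

lemma inv_sqrt_sub_inv_sqrt_add_mul_sq_le {x c : ℝ} (hx : 0 < x) (hc : 0 ≤ c) :
    (√x)⁻¹ - (√(x + c * x ^ 2))⁻¹ ≤ c / 2 * √x := by
  set a := √x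
  set b := √(x + c * x ^ 2)
  have ha : 0 < a := Real.sqrt_pos.2 hx
  have hab : a ≤ b := Real.sqrt_le_sqrt (le_add_of_nonneg_right (by positivity))
  have hb : 0 < b := ha.trans_le hab
  have ha2 : a ^ 2 = x := Real.sq_sqrt hx.le
  have hb2 : b ^ 2 = x + c * x ^ 2 := Real.sq_sqrt (by positivity)
  have hdiff : (b - a) * (a + b) = c * a ^ 4 := by
    rw [show a ^ 4 = (a ^ 2) ^ 2 by ring, ha2]
    linear_combination hb2 - ha2
  rw [inv_sub_inv ha.ne' hb.ne', div_le_iff₀ (mul_pos ha hb)]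
  refine le_of_mul_le_mul_right ?_ (add_pos ha hb)
  rw [hdiff]
  -- by `hdiff`, the claim is `c a² (b - a) (b + 2a) ≥ 0`
  linarith [mul_nonneg (mul_nonneg hc (sq_nonneg a))
    (mul_nonneg (sub_nonneg.2 hab) (by positivity : 0 ≤ b + 2 * a))]

namespace Matrix

variable {n 𝕜 : Type*} [Fintype n] [DecidableEq n] [RCLike 𝕜]

lemma sum_norm_sq_of_mem_unitaryGroup {U : Matrix n n 𝕜} (hU : U ∈ unitaryGroup n 𝕜) (j : n) :
    ∑ i, ‖U j i‖ ^ 2 = 1 := by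
  have h := congr_fun₂ (mem_unitaryGroup_iff.1 hU) j j
  simp only [mul_apply, star_apply, one_apply_eq, RCLike.star_def, RCLike.mul_conj] at h
  exact_mod_cast h

lemma sum_norm_mul_norm_le_one_of_mem_unitaryGroup {U : Matrix n n 𝕜}
    (hU : U ∈ unitaryGroup n 𝕜) (j k : n) : ∑ i, ‖U j i‖ * ‖U k i‖ ≤ 1 :=
  calc ∑ i, ‖U j i‖ * ‖U k i‖ ≤ ∑ i, (‖U j i‖ ^ 2 + ‖U k i‖ ^ 2) / 2 :=
        sum_le_sum fun i _ => by linarith [two_mul_le_add_sq ‖U j i‖ ‖U k i‖]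
    _ = 1 := by
        rw [← sum_div, sum_add_distrib, sum_norm_sq_of_mem_unitaryGroup hU,
          sum_norm_sq_of_mem_unitaryGroup hU]
        norm_num

lemma IsHermitian.norm_cfc_apply_le {A : Matrix n n 𝕜} (hA : A.IsHermitian) {f : ℝ → ℝ} {M : ℝ}
    (hf : ∀ x ∈ spectrum ℝ A, |f x| ≤ M) (j k : n) : ‖cfc f A j k‖ ≤ M := by
  set U : Matrix n n 𝕜 := ↑hA.eigenvectorUnitary
  have hfM : ∀ i, |f (hA.eigenvalues i)| ≤ M := fun i => hf _ (hA.eigenvalues_mem_spectrum_real i)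
  have hM : 0 ≤ M := (abs_nonneg _).trans (hfM j)
  have hentry : cfc f A j k = ∑ i, U j i * f (hA.eigenvalues i) * star (U k i) := by
    rw [hA.cfc_eq, IsHermitian.cfc, Unitary.conjStarAlgAut_apply, mul_apply]
    simp only [mul_diagonal, star_apply, Function.comp_apply, U]
  calc ‖cfc f A j k‖ ≤ ∑ i, ‖U j i * f (hA.eigenvalues i) * star (U k i)‖ := by
        rw [hentry]; exact norm_sum_le _ _
    _ ≤ ∑ i, M * (‖U j i‖ * ‖U k i‖) := sum_le_sum fun i _ => by
        rw [norm_mul, norm_mul, norm_star, RCLike.norm_ofReal]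
        linarith [mul_le_mul_of_nonneg_right (hfM i) (by positivity : 0 ≤ ‖U j i‖ * ‖U k i‖)]
    _ = M * ∑ i, ‖U j i‖ * ‖U k i‖ := (mul_sum ..).symm
    _ ≤ M := mul_le_of_le_one_right hM <|
        sum_norm_mul_norm_le_one_of_mem_unitaryGroup hA.eigenvectorUnitary.2 j k

lemma IsHermitian.le_iSup_eigenvalues {A : Matrix n n 𝕜} (hA : A.IsHermitian) {x : ℝ}
    (hx : x ∈ spectrum ℝ A) : x ≤ ⨆ i, hA.eigenvalues i := by
  rw [hA.spectrum_real_eq_range_eigenvalues] at hx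
  obtain ⟨i, rfl⟩ := hx
  exact le_ciSup (Set.finite_range _).bddAbove i

lemma PosDef.inv_eq_cfc_of_mul_self_eq {A R : Matrix n n 𝕜} (hA : A.PosDef) (hR : R.PosSemidef)
    (hRA : R * R = A) : R⁻¹ = cfc (fun x => (√x)⁻¹) A := by
  have hsqrt : R = cfc Real.sqrt A := by
    rw [← CFC.sqrt_unique hRA hR.nonneg, CFC.sqrt_eq_real_sqrt A hA.posSemidef.nonneg,
      cfcₙ_eq_cfc (hf0 := Real.sqrt_zero)]
  have hsqrt_ne : ∀ x ∈ spectrum ℝ A, √x ≠ 0 := fun x hx =>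
    (Real.sqrt_pos.2 (hA.isStrictlyPositive.spectrum_pos hx)).ne'
  rw [nonsing_inv_eq_ringInverse, hsqrt]
  exact (cfc_inv _ _ hsqrt_ne (ha := hA.isHermitian)).symm

end Matrix

open Matrix in
theorem inv_sqrt_entry_bound_general
    (K : ℕ)
    (Sig : Matrix (Fin K) (Fin K) ℝ) (hSig : Sig.PosDef)
    (c : ℝ) (hc : 0 ≤ c)
    (R S : Matrix (Fin K) (Fin K) ℝ)
    (hRpd : R.PosDef) (hRsq : R * R = Sig)
    (hSpd : S.PosDef) (hSsq : S * S = Sig + c • (Sig * Sig)) :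
    (R⁻¹ - S⁻¹).PosSemidef ∧
      ∀ j k, |(R⁻¹ - S⁻¹) j k| ≤
        (c / 2) * Real.sqrt (⨆ i, hSig.isHermitian.eigenvalues i) := by
  have hSig2 : Sig + c • (Sig * Sig) = cfc (fun x => x + c * x ^ 2) Sig := by
    rw [cfc_add .., cfc_const_mul .., cfc_pow .., cfc_id' ℝ Sig, sq]
  have hSig2pd : (Sig + c • (Sig * Sig)).PosDef := by
    refine hSig.add_posSemidef (PosSemidef.smul ?_ hc)
    simpa only [hSig.isHermitian.eq] using posSemidef_conjTranspose_mul_self Sig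
  have hSinv : S⁻¹ = cfc (fun x => (√(x + c * x ^ 2))⁻¹) Sig := by
    rw [hSig2pd.inv_eq_cfc_of_mul_self_eq hSpd.posSemidef hSsq, hSig2,
      cfc_comp' (fun x => (√x)⁻¹) _ Sig ((Sig.finite_real_spectrum.image _).continuousOn _)]
  rw [hSig.inv_eq_cfc_of_mul_self_eq hRpd.posSemidef hRsq, hSinv,
    ← cfc_sub _ _ Sig (Sig.finite_real_spectrum.continuousOn _)
      (Sig.finite_real_spectrum.continuousOn _)]
  have hspec : ∀ x ∈ spectrum ℝ Sig, 0 < x := fun x hx => hSig.isStrictlyPositive.spectrum_pos hx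
  refine ⟨nonneg_iff_posSemidef.1 <| cfc_nonneg fun x hx =>
      inv_sqrt_sub_inv_sqrt_add_mul_sq_nonneg (hspec x hx) hc, fun j k => ?_⟩
  refine hSig.isHermitian.norm_cfc_apply_le (fun x hx => ?_) j k
  rw [abs_of_nonneg (inv_sqrt_sub_inv_sqrt_add_mul_sq_nonneg (hspec x hx) hc)]
  exact (inv_sqrt_sub_inv_sqrt_add_mul_sq_le (hspec x hx) hc).trans <|
    by gcongr; exact hSig.isHermitian.le_iSup_eigenvalues hx

/-- for a symmetric positive definite `Σ` and `c ≥ 0`, the matrix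
`A = Σ^{-1/2} − (Σ + cΣ²)^{-1/2}` is positive semidefinite and every entry satisfies
`|A j k| ≤ (c/2) √(λ_max(Σ))`. Here `R` and `S` are the (unique) symmetric positive
definite square roots of `Σ` and `Σ + cΣ²` respectively. -/
theorem inv_sqrt_entry_bound
    (K : ℕ) (hK : 0 < K)
    (Sig : Matrix (Fin K) (Fin K) ℝ) (hSig : Sig.PosDef)
    (c : ℝ) (hc : 0 ≤ c)
    (R S : Matrix (Fin K) (Fin K) ℝ)
    (hRpd : R.PosDef) (hRsq : R * R = Sig)
    (hSpd : S.PosDef) (hSsq : S * S = Sig + c • (Sig * Sig)) :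
    (R⁻¹ - S⁻¹).PosSemidef ∧
      ∀ j k, |(R⁻¹ - S⁻¹) j k| ≤
        (c / 2) * Real.sqrt (⨆ i, hSig.isHermitian.eigenvalues i) :=
  inv_sqrt_entry_bound_general K Sig hSig c hc R S hRpd hRsq hSpd hSsq
end
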